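/- Let g be a convex geometry on a finite set I with |I| = n. Then the following are equivalent: (1) there exists a chain ∅ = B_0 ⊊ B_1 ⊊ … ⊊ B_n = I of convex sets with |B_j| = j for each j, such that every B_j belongs to every inclusion-maximal order-ideal family of g; (2) g is supersolvable. -/

import Mathlib

/-- A (loopless) convex geometry on a finite ground set `I`: a closure operator
on subsets of `I` satisfying looplessness and the anti-exchange axiom. -/
structure ConvexGeometry (I : Type*) [DecidableEq I] [Fintype I] where
  cl : Finset I → Finset I
  subset_cl : ∀ A, A ⊆ cl A
  mono : ∀ ⦃A B : Finset I⦄, A ⊆ B → cl A ⊆ cl B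
  idem : ∀ A, cl (cl A) = cl A
  loopless : cl ∅ = ∅
  antiExchange : ∀ (A : Finset I) (a b : I), a ≠ b → a ∉ cl A → b ∉ cl A →
    a ∈ cl (insert b A) → b ∉ cl (insert a A)

variable {I : Type*} [DecidableEq I] [Fintype I]

/-- The set of extreme points of `K`: `Ex(K) = {a ∈ K : a ∉ g(K \ {a})}`. -/
def ConvexGeometry.Ex (g : ConvexGeometry I) (K : Finset I) : Finset I :=
  K.filter fun a => a ∉ g.cl (K.erase a)

/-- The sublattice of the lattice of convex sets of `g` generated by a family
`X` of convex sets: the smallest collection containing `X` and closed under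
meet `A ∧ B = A ∩ B` and join `A ∨ B = g(A ∪ B)`. -/
inductive GenSublattice (g : ConvexGeometry I) (X : Set (Finset I)) : Finset I → Prop
  | base {A : Finset I} : A ∈ X → GenSublattice g X A
  | inf {A B : Finset I} : GenSublattice g X A → GenSublattice g X B →
      GenSublattice g X (A ∩ B)
  | sup {A B : Finset I} : GenSublattice g X A → GenSublattice g X B →
      GenSublattice g X (g.cl (A ∪ B))

/-- A maximal chain of the lattice of convex sets of `g`:
`∅ = C_0 ⊊ C_1 ⊊ … ⊊ C_n = I` of convex sets with `|C_j| = j`, `n = |I|`. -/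
def IsMaximalChain (g : ConvexGeometry I) (C : ℕ → Finset I) : Prop :=
  C 0 = ∅ ∧ C (Fintype.card I) = Finset.univ ∧
    (∀ j ≤ Fintype.card I, g.cl (C j) = C j ∧ (C j).card = j) ∧
    ∀ j < Fintype.card I, C j ⊂ C (j + 1)

/-- A family of convex sets satisfies the distributive law (as a lattice with
meet `∩` and join `A ∨ B = g(A ∪ B)`). -/
def DistribOn (g : ConvexGeometry I) (X : Finset I → Prop) : Prop :=
  ∀ a b c : Finset I, X a → X b → X c →
    a ∩ g.cl (b ∪ c) = g.cl ((a ∩ b) ∪ (a ∩ c))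

/-- `g` is supersolvable: there is a maximal chain `C` (a chief chain) such
that for every chain `m` of convex sets, the sublattice generated by `C ∪ m`
is distributive. -/
def Supersolvable (g : ConvexGeometry I) : Prop :=
  ∃ C : ℕ → Finset I, IsMaximalChain g C ∧
    ∀ m : Set (Finset I), (∀ a ∈ m, g.cl a = a) → IsChain (· ⊆ ·) m →
      DistribOn g (GenSublattice g ({A | ∃ j ≤ Fintype.card I, A = C j} ∪ m))

/-- An order-ideal family of `g`: a collection of convex sets containing `∅`
and `I`, closed under pairwise unions and intersections, and point-separating. -/
def IsOrderIdealFamily (g : ConvexGeometry I) (D : Set (Finset I)) : Prop :=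
  (∀ a ∈ D, g.cl a = a) ∧ (∅ : Finset I) ∈ D ∧ (Finset.univ : Finset I) ∈ D ∧
    (∀ a ∈ D, ∀ b ∈ D, a ∪ b ∈ D ∧ a ∩ b ∈ D) ∧
    ∀ x y : I, x ≠ y → ∃ a ∈ D, (x ∈ a ∧ y ∉ a) ∨ (y ∈ a ∧ x ∉ a)

/-- An inclusion-maximal order-ideal family of `g`. -/
def IsMaxOrderIdealFamily (g : ConvexGeometry I) (D : Set (Finset I)) : Prop :=
  IsOrderIdealFamily g D ∧ ∀ D', IsOrderIdealFamily g D' → D ⊆ D' → D' = D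

/-!
Both conditions say that some maximal chain consists of sets `K` with `g (K ∪ L) = K ∪ L` for
every convex `L` (`JoinEqUnion`).
If `K` has this property and `D` is an order-ideal family, so is `{a ∩ K ∪ b | a, b ∈ D} ⊇ D`,
which contains `K`; hence `K` lies in every maximal `D`. Conversely, a maximal `D` containing a
maximal chain through `L` contains `K ∪ L` whenever it contains `K`.
For a chain `C` of such sets and a chain `m` of convex sets, the sets `⋃ⱼ C j ∩ N j` with `N`
decreasing in `m` are convex and closed under `∩` and `∪`, so in the sublattice generated by
`C ∪ m` joins are unions, and it is distributive. Conversely, if `C j` has the property but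
`C (j+1) ∪ L = insert x (C j ∪ L)` is not convex, anti-exchange yields a convex `W ⊇ C j ∪ L`
avoiding `x` and meeting `g (C (j+1) ∪ L)` outside `C j ∪ L`, and distributivity fails at
`W ∧ (C (j+1) ∨ L)`.
-/

open Finset

section Staircases

variable {α : Type*} [DecidableEq α]

lemma IsChain.finset_inter_mem {s : Set (Finset α)} (hs : IsChain (· ⊆ ·) s)
    {A B : Finset α} (hA : A ∈ s) (hB : B ∈ s) : A ∩ B ∈ s := by
  rcases hs.total hA hB with h | h
  · rwa [inter_eq_left.2 h]
  · rwa [inter_eq_right.2 h]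

lemma IsChain.finset_union_mem {s : Set (Finset α)} (hs : IsChain (· ⊆ ·) s)
    {A B : Finset α} (hA : A ∈ s) (hB : B ∈ s) : A ∪ B ∈ s := by
  rcases hs.total hA hB with h | h
  · rwa [union_eq_right.2 h]
  · rwa [union_eq_left.2 h]

lemma Finset.biUnion_inter_inter_biUnion_inter {ι : Type*} [LinearOrder ι]
    {C N N' : ι → Finset α} (hN : Antitone N) (hN' : Antitone N') (s : Finset ι) :
    (s.biUnion fun j => C j ∩ N j) ∩ (s.biUnion fun j => C j ∩ N' j) =
      s.biUnion fun j => C j ∩ (N j ∩ N' j) := by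
  ext x
  simp only [mem_inter, mem_biUnion]
  constructor
  · rintro ⟨⟨i, hi, hxCi, hxNi⟩, ⟨j, hj, hxCj, hxN'j⟩⟩
    rcases le_total i j with h | h
    · exact ⟨i, hi, hxCi, hxNi, hN' h hxN'j⟩
    · exact ⟨j, hj, hxCj, hN h hxNi, hxN'j⟩
  · rintro ⟨j, hj, hxC, hxN, hxN'⟩
    exact ⟨⟨j, hj, hxC, hxN⟩, ⟨j, hj, hxC, hxN'⟩⟩

/-- The normal form of the sets in the lattice of sets generated by two chains. -/
def staircases (C : ℕ → Finset α) (m : Set (Finset α)) (n : ℕ) : Set (Finset α) :=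
  {S | ∃ N : ℕ → Finset α, Antitone N ∧ (∀ j, N j ∈ m) ∧
    S = (range (n + 1)).biUnion fun j => C j ∩ N j}

variable {C : ℕ → Finset α} {m : Set (Finset α)} {n : ℕ}

lemma inter_mem_staircases (hm : ∀ A ∈ m, ∀ B ∈ m, A ∩ B ∈ m) {S T : Finset α}
    (hS : S ∈ staircases C m n) (hT : T ∈ staircases C m n) : S ∩ T ∈ staircases C m n := by
  obtain ⟨N, hN, hNm, rfl⟩ := hS
  obtain ⟨N', hN', hN'm, rfl⟩ := hT
  exact ⟨fun j => N j ∩ N' j, fun i j h => inter_subset_inter (hN h) (hN' h),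
    fun j => hm _ (hNm j) _ (hN'm j), biUnion_inter_inter_biUnion_inter hN hN' _⟩

lemma union_mem_staircases (hm : ∀ A ∈ m, ∀ B ∈ m, A ∪ B ∈ m) {S T : Finset α}
    (hS : S ∈ staircases C m n) (hT : T ∈ staircases C m n) : S ∪ T ∈ staircases C m n := by
  obtain ⟨N, hN, hNm, rfl⟩ := hS
  obtain ⟨N', hN', hN'm, rfl⟩ := hT
  refine ⟨fun j => N j ∪ N' j, fun i j h => union_subset_union (hN h) (hN' h),
    fun j => hm _ (hNm j) _ (hN'm j), ?_⟩
  simp only [inter_union_distrib_left, biUnion_union]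

lemma mem_staircases_of_subset {M : Finset α} (hM : M ∈ m) (hMC : M ⊆ C n) :
    M ∈ staircases C m n := by
  refine ⟨fun _ => M, antitone_const, fun _ => hM, ?_⟩
  ext x
  simp only [mem_biUnion, mem_range, mem_inter]
  exact ⟨fun hx => ⟨n, n.lt_succ_self, hMC hx, hx⟩, fun ⟨_, _, _, hx⟩ => hx⟩

lemma mem_staircases_of_le (hC : Monotone C) (hemp : ∅ ∈ m) {U : Finset α} (hU : U ∈ m)
    {i : ℕ} (hi : i ≤ n) (hCU : C i ⊆ U) : C i ∈ staircases C m n := by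
  refine ⟨fun j => if j ≤ i then U else ∅, fun a b hab => ?_,
    fun j => by dsimp only; split_ifs <;> assumption, ?_⟩
  · dsimp only
    split_ifs <;> first | exact empty_subset _ | exact subset_rfl | omega
  · ext x
    simp only [mem_biUnion, mem_range, mem_inter]
    refine ⟨fun hx => ⟨i, by omega, hx, by simpa using hCU hx⟩, fun ⟨j, _, hxC, hxN⟩ => ?_⟩
    split_ifs at hxN with hji
    · exact hC hji hxC
    · simp at hxN

end Staircases

namespace ConvexGeometry

def JoinEqUnion (g : ConvexGeometry I) (K : Finset I) : Prop :=
  ∀ L, g.cl L = L → g.cl (K ∪ L) = K ∪ L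

variable {g : ConvexGeometry I}

lemma cl_univ : g.cl univ = univ :=
  (subset_univ _).antisymm (g.subset_cl _)

lemma cl_inter_eq {A B : Finset I} (hA : g.cl A = A) (hB : g.cl B = B) :
    g.cl (A ∩ B) = A ∩ B :=
  (subset_inter ((g.mono inter_subset_left).trans hA.subset)
    ((g.mono inter_subset_right).trans hB.subset)).antisymm (g.subset_cl _)

lemma exists_cl_insert_eq {K T : Finset I} (hK : g.cl K = K) (hT : g.cl T = T) (hKT : K ⊂ T) :
    ∃ p ∈ T \ K, g.cl (insert p K) = insert p K := by
  -- a `p` with the smallest hull `g (K ∪ {p})` works, by anti-exchange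
  obtain ⟨p, hp, hmin⟩ := (T \ K).exists_min_image (fun p => (g.cl (insert p K)).card)
    (sdiff_nonempty.2 hKT.not_subset)
  obtain ⟨hpT, hpK⟩ := mem_sdiff.1 hp
  refine ⟨p, hp, Subset.antisymm (fun q hq => ?_) (g.subset_cl _)⟩
  by_contra hqpK
  rw [mem_insert, not_or] at hqpK
  have hqT : q ∈ T := hT ▸ g.mono (insert_subset hpT hKT.subset) hq
  have hsub : g.cl (insert q K) ⊆ g.cl (insert p K) := by
    simpa only [g.idem] using
      g.mono (insert_subset hq ((subset_insert p K).trans (g.subset_cl _)))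
  have hp_not : p ∉ g.cl (insert q K) :=
    g.antiExchange K q p hqpK.1 (by rw [hK]; exact hqpK.2) (by rwa [hK]) hq
  exact (hmin q (mem_sdiff.2 ⟨hqT, hqpK.2⟩)).not_gt
    (card_lt_card ⟨hsub, fun h => hp_not (h (g.subset_cl _ (mem_insert_self p K)))⟩)

lemma exists_convex_of_cl_insert_ne {K : Finset I} (hK : g.cl K = K) {x : I} (hx : x ∉ K)
    (hne : g.cl (insert x K) ≠ insert x K) :
    ∃ W, g.cl W = W ∧ K ⊆ W ∧ x ∉ W ∧ ¬W ∩ g.cl (insert x K) ⊆ K := by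
  obtain ⟨y, hy, hyxK⟩ := not_subset.1 fun h => hne (h.antisymm (g.subset_cl _))
  rw [mem_insert, not_or] at hyxK
  refine ⟨g.cl (insert y K), g.idem _, (subset_insert y K).trans (g.subset_cl _),
    g.antiExchange K y x hyxK.1 (by rw [hK]; exact hyxK.2) (by rwa [hK]) hy, fun h => hyxK.2 ?_⟩
  exact h (mem_inter.2 ⟨g.subset_cl _ (mem_insert_self y K), hy⟩)

variable (g) in
noncomputable def grow (T K : Finset I) : Finset I :=
  if h : ∃ p ∈ T \ K, g.cl (insert p K) = insert p K then insert h.choose K else K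

lemma grow_spec {K T : Finset I} (hK : g.cl K = K) (hT : g.cl T = T) (hKT : K ⊂ T) :
    K ⊆ g.grow T K ∧ g.grow T K ⊆ T ∧ g.cl (g.grow T K) = g.grow T K ∧
      (g.grow T K).card = K.card + 1 := by
  have h := exists_cl_insert_eq hK hT hKT
  obtain ⟨hp, hcl⟩ := h.choose_spec
  rw [grow, dif_pos h]
  exact ⟨subset_insert _ _, insert_subset (mem_sdiff.1 hp).1 hKT.subset, hcl,
    card_insert_of_notMem (mem_sdiff.1 hp).2⟩

variable (g) in
noncomputable def growToward (L K : Finset I) : Finset I :=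
  g.grow (if K ⊂ L then L else univ) K

lemma growToward_spec {K L : Finset I} (hL : g.cl L = L) (hK : g.cl K = K)
    (hcard : K.card < Fintype.card I) (hKL : K ⊆ L ∨ L ⊆ K) :
    K ⊆ g.growToward L K ∧ g.cl (g.growToward L K) = g.growToward L K ∧
      (g.growToward L K).card = K.card + 1 ∧ (g.growToward L K ⊆ L ∨ L ⊆ g.growToward L K) := by
  unfold growToward
  split_ifs with hKL'
  · obtain ⟨h1, h2, h3, h4⟩ := grow_spec hK hL hKL'
    exact ⟨h1, h3, h4, Or.inl h2⟩
  · have hKU : K ⊂ univ := ssubset_univ_iff.2 fun h => by simp [h] at hcard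
    obtain ⟨h1, -, h3, h4⟩ := grow_spec hK cl_univ hKU
    have hLK : L ⊆ K := hKL.elim (fun h => (h.eq_or_ssubset.resolve_right hKL').symm.subset) id
    exact ⟨h1, h3, h4, Or.inr (hLK.trans h1)⟩

variable (g) in
noncomputable def chainThrough (L : Finset I) (j : ℕ) : Finset I :=
  (g.growToward L)^[j] ∅

lemma chainThrough_succ (L : Finset I) (j : ℕ) :
    g.chainThrough L (j + 1) = g.growToward L (g.chainThrough L j) :=
  Function.iterate_succ_apply' _ _ _

lemma chainThrough_spec {L : Finset I} (hL : g.cl L = L) {j : ℕ} (hj : j ≤ Fintype.card I) :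
    g.cl (g.chainThrough L j) = g.chainThrough L j ∧ (g.chainThrough L j).card = j ∧
      (g.chainThrough L j ⊆ L ∨ L ⊆ g.chainThrough L j) := by
  induction j with
  | zero => exact ⟨g.loopless, card_empty, Or.inl (empty_subset _)⟩
  | succ j ih =>
    obtain ⟨hcl, hcard, hKL⟩ := ih (by omega)
    obtain ⟨-, h2, h3, h4⟩ := growToward_spec hL hcl (by omega) hKL
    rw [chainThrough_succ, h3, hcard]
    exact ⟨h2, rfl, h4⟩

lemma exists_isMaximalChain_eq {L : Finset I} (hL : g.cl L = L) :
    ∃ C, IsMaximalChain g C ∧ C L.card = L := by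
  refine ⟨g.chainThrough L, ⟨rfl, ?_, fun j hj => (chainThrough_spec hL hj).imp_right And.left,
    fun j hj => ?_⟩, ?_⟩
  · exact eq_univ_of_card _ (chainThrough_spec hL le_rfl).2.1
  · obtain ⟨hcl, hcard, hKL⟩ := chainThrough_spec hL hj.le
    obtain ⟨h1, -, h3, -⟩ := growToward_spec hL hcl (by omega) hKL
    rw [chainThrough_succ]
    exact h1.ssubset_of_ne fun h => by simp [← h] at h3
  · obtain ⟨-, hcard, hKL⟩ := chainThrough_spec hL (card_le_univ L)
    rcases hKL with h | h
    · exact eq_of_subset_of_card_le h hcard.ge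
    · exact (eq_of_subset_of_card_le h hcard.le).symm

end ConvexGeometry

namespace IsMaximalChain

variable {g : ConvexGeometry I} {C : ℕ → Finset I}

lemma monotone_min (hC : IsMaximalChain g C) :
    Monotone fun j => C (min j (Fintype.card I)) := by
  refine monotone_nat_of_le_succ fun j => ?_
  rcases lt_or_ge j (Fintype.card I) with hj | hj
  · simp only [min_eq_left hj.le, min_eq_left (Nat.succ_le_of_lt hj)]
    exact (hC.2.2.2 j hj).subset
  · simp only [min_eq_right hj, min_eq_right (hj.trans j.le_succ), le_refl]

lemma subset_of_le (hC : IsMaximalChain g C) {i j : ℕ} (hij : i ≤ j)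
    (hj : j ≤ Fintype.card I) : C i ⊆ C j := by
  simpa only [min_eq_left hj, min_eq_left (hij.trans hj)] using hC.monotone_min hij

lemma exists_succ_eq_insert (hC : IsMaximalChain g C) {j : ℕ} (hj : j < Fintype.card I) :
    ∃ p ∉ C j, C (j + 1) = insert p (C j) := by
  obtain ⟨p, hp, hpj⟩ := exists_of_ssubset (hC.2.2.2 j hj)
  refine ⟨p, hpj, (eq_of_subset_of_card_le (insert_subset hp (hC.2.2.2 j hj).subset) ?_).symm⟩
  rw [card_insert_of_notMem hpj, (hC.2.2.1 _ hj).2, (hC.2.2.1 _ hj.le).2]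

lemma isOrderIdealFamily (hC : IsMaximalChain g C) :
    IsOrderIdealFamily g {A | ∃ j ≤ Fintype.card I, A = C j} := by
  refine ⟨?_, ⟨0, Nat.zero_le _, hC.1.symm⟩, ⟨_, le_rfl, hC.2.1.symm⟩, ?_, fun x y hxy => ?_⟩
  · rintro _ ⟨j, hj, rfl⟩
    exact (hC.2.2.1 j hj).1
  · rintro _ ⟨i, hi, rfl⟩ _ ⟨j, hj, rfl⟩
    rcases le_total i j with h | h
    · have hsub := hC.subset_of_le h hj
      exact ⟨⟨j, hj, union_eq_right.2 hsub⟩, ⟨i, hi, inter_eq_left.2 hsub⟩⟩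
    · have hsub := hC.subset_of_le h hi
      exact ⟨⟨i, hi, union_eq_left.2 hsub⟩, ⟨j, hj, inter_eq_right.2 hsub⟩⟩
  -- the first member of the chain meeting `{x, y}` contains exactly one of them
  have hex : ∃ j, x ∈ C j ∨ y ∈ C j := ⟨Fintype.card I, by simp [hC.2.1]⟩
  obtain ⟨k, hk⟩ : ∃ k, Nat.find hex = k + 1 :=
    Nat.exists_eq_succ_of_ne_zero fun h0 => by simpa [h0, hC.1] using Nat.find_spec hex
  have hkn : k < Fintype.card I := by
    have := Nat.find_min' hex (by simp [hC.2.1] : x ∈ C (Fintype.card I) ∨ _)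
    omega
  have hbefore : ¬(x ∈ C k ∨ y ∈ C k) := Nat.find_min hex (by omega)
  have hfirst := Nat.find_spec hex
  obtain ⟨p, -, hp⟩ := hC.exists_succ_eq_insert hkn
  rw [hk, hp] at hfirst
  refine ⟨C (k + 1), ⟨k + 1, hkn, rfl⟩, ?_⟩
  rw [hp]
  simp only [mem_insert] at hfirst ⊢
  grind

end IsMaximalChain

namespace IsOrderIdealFamily

variable {g : ConvexGeometry I} {D : Set (Finset I)}

lemma exists_isMaxOrderIdealFamily_superset (hD : IsOrderIdealFamily g D) :
    ∃ D', IsMaxOrderIdealFamily g D' ∧ D ⊆ D' := by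
  obtain ⟨D', hDD', hD'⟩ := Finite.exists_le_maximal hD
  exact ⟨D', ⟨hD'.prop, fun D'' hD'' h => hD'.eq_of_ge hD'' h⟩, hDD'⟩

lemma setOf_inter_union (hD : IsOrderIdealFamily g D) {K : Finset I} (hK : g.JoinEqUnion K) :
    IsOrderIdealFamily g {S | ∃ a ∈ D, ∃ b ∈ D, S = a ∩ K ∪ b} := by
  obtain ⟨hcl, hemp, huniv, hclosed, hsep⟩ := hD
  have hsub : D ⊆ {S | ∃ a ∈ D, ∃ b ∈ D, S = a ∩ K ∪ b} :=
    fun a ha => ⟨a, ha, a, ha, (union_eq_right.2 inter_subset_left).symm⟩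
  refine ⟨?_, hsub hemp, hsub huniv, ?_, fun x y hxy => ?_⟩
  · rintro _ ⟨a, ha, b, hb, rfl⟩
    rw [inter_union_distrib_right]
    exact ConvexGeometry.cl_inter_eq (hcl _ (hclosed a ha b hb).1) (hK b (hcl b hb))
  · rintro _ ⟨a, ha, b, hb, rfl⟩ _ ⟨c, hc, d, hd, rfl⟩
    have had := (hclosed a ha d hd).2
    have hbc := (hclosed b hb c hc).2
    refine ⟨⟨a ∪ c, (hclosed a ha c hc).1, b ∪ d, (hclosed b hb d hd).1, ?_⟩,
      ⟨a ∩ c ∪ (a ∩ d ∪ b ∩ c), (hclosed _ (hclosed a ha c hc).2 _ (hclosed _ had _ hbc).1).1,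
        b ∩ d, (hclosed b hb d hd).2, ?_⟩⟩ <;>
    · ext x
      simp only [mem_union, mem_inter]
      tauto
  · obtain ⟨a, ha, h⟩ := hsep x y hxy
    exact ⟨a, hsub ha, h⟩

end IsOrderIdealFamily

lemma IsMaxOrderIdealFamily.mem_of_joinEqUnion {g : ConvexGeometry I} {D : Set (Finset I)}
    (hD : IsMaxOrderIdealFamily g D) {K : Finset I} (hK : g.JoinEqUnion K) : K ∈ D := by
  rw [← hD.2 _ (hD.1.setOf_inter_union hK)
    fun a ha => ⟨a, ha, a, ha, (union_eq_right.2 inter_subset_left).symm⟩]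
  exact ⟨univ, hD.1.2.2.1, ∅, hD.1.2.1, by simp⟩

namespace ConvexGeometry

variable {g : ConvexGeometry I}

lemma joinEqUnion_of_forall_mem {K : Finset I} (hK : ∀ D, IsMaxOrderIdealFamily g D → K ∈ D) :
    g.JoinEqUnion K := by
  intro L hL
  obtain ⟨C, hC, hCL⟩ := exists_isMaximalChain_eq hL
  obtain ⟨D, hD, hCD⟩ := hC.isOrderIdealFamily.exists_isMaxOrderIdealFamily_superset
  exact hD.1.1 _ (hD.1.2.2.2.1 K (hK D hD) L (hCD ⟨L.card, card_le_univ L, hCL.symm⟩)).1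

lemma distribOn_genSublattice {X F : Set (Finset I)} (hF : ∀ S ∈ F, g.cl S = S)
    (hinter : ∀ A ∈ F, ∀ B ∈ F, A ∩ B ∈ F) (hunion : ∀ A ∈ F, ∀ B ∈ F, A ∪ B ∈ F)
    (hXF : X ⊆ F) : DistribOn g (GenSublattice g X) := by
  have hmem : ∀ S, GenSublattice g X S → S ∈ F := by
    intro S hS
    induction hS with
    | base hA => exact hXF hA
    | inf _ _ hA hB => exact hinter _ hA _ hB
    | sup _ _ hA hB => rw [hF _ (hunion _ hA _ hB)]; exact hunion _ hA _ hB
  intro a b c ha hb hc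
  replace ha := hmem a ha
  replace hb := hmem b hb
  replace hc := hmem c hc
  rw [hF _ (hunion _ hb _ hc), hF _ (hunion _ (hinter _ ha _ hb) _ (hinter _ ha _ hc))]
  exact inter_union_distrib_left a b c

lemma cl_union_biUnion_inter {C N : ℕ → Finset I} (hC : Monotone C)
    (hCN : ∀ j, g.JoinEqUnion (C j)) (hN : Antitone N) (hNcl : ∀ j, g.cl (N j) = N j)
    (k : ℕ) {M : Finset I} (hM : g.cl M = M) (hMN : M ⊆ N k) :
    g.cl (M ∪ (range k).biUnion fun j => C j ∩ N j) =
      M ∪ (range k).biUnion fun j => C j ∩ N j := by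
  induction k generalizing M with
  | zero => simpa using hM
  | succ k ih =>
    set T := (range k).biUnion fun j => C j ∩ N j
    have hTC : T ⊆ C k :=
      biUnion_subset.2 fun j hj => inter_subset_left.trans (hC (mem_range.1 hj).le)
    have hMk : M ⊆ N k := hMN.trans (hN k.le_succ)
    have hsplit : M ∪ (range (k + 1)).biUnion (fun j => C j ∩ N j) = (C k ∪ M) ∩ (N k ∪ T) := by
      rw [range_add_one, biUnion_insert]
      ext x
      have := @hTC x
      have := @hMk x
      simp only [mem_union, mem_inter]
      tauto
    rw [hsplit]
    exact cl_inter_eq (hCN k M hM) (ih (hNcl k) subset_rfl)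

lemma cl_eq_of_mem_staircases {C : ℕ → Finset I} {m : Set (Finset I)} {n : ℕ} (hC : Monotone C)
    (hCN : ∀ j, g.JoinEqUnion (C j)) (hm : ∀ A ∈ m, g.cl A = A) {S : Finset I}
    (hS : S ∈ staircases C m n) : g.cl S = S := by
  obtain ⟨N, hN, hNm, rfl⟩ := hS
  simpa using cl_union_biUnion_inter hC hCN hN (fun j => hm _ (hNm j)) (n + 1) g.loopless
    (empty_subset _)

end ConvexGeometry

lemma IsMaximalChain.distribOn_genSublattice {g : ConvexGeometry I} {C : ℕ → Finset I}
    (hC : IsMaximalChain g C) (hCN : ∀ j ≤ Fintype.card I, g.JoinEqUnion (C j))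
    {m : Set (Finset I)} (hm : ∀ a ∈ m, g.cl a = a) (hch : IsChain (· ⊆ ·) m) :
    DistribOn g (GenSublattice g ({A | ∃ j ≤ Fintype.card I, A = C j} ∪ m)) := by
  set n := Fintype.card I
  set C' : ℕ → Finset I := fun j => C (min j n)
  have hC'N : ∀ j, g.JoinEqUnion (C' j) := fun j => hCN _ (min_le_right j n)
  set m' : Set (Finset I) := insert ∅ (insert univ m)
  have hch' : IsChain (· ⊆ ·) m' :=
    (hch.insert fun _ _ _ => Or.inr (subset_univ _)).insert fun _ _ _ => Or.inl (empty_subset _)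
  have hm' : ∀ a ∈ m', g.cl a = a := by
    rintro a (rfl | rfl | ha)
    exacts [g.loopless, ConvexGeometry.cl_univ, hm a ha]
  refine ConvexGeometry.distribOn_genSublattice (F := staircases C' m' n)
    (fun S => ConvexGeometry.cl_eq_of_mem_staircases hC.monotone_min hC'N hm')
    (fun _ hA _ hB => inter_mem_staircases (fun _ hA _ hB => hch'.finset_inter_mem hA hB) hA hB)
    (fun _ hA _ hB => union_mem_staircases (fun _ hA _ hB => hch'.finset_union_mem hA hB) hA hB) ?_
  rintro _ (⟨j, hj, rfl⟩ | hA)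
  · have hCj : C j = C' j := by simp only [C', min_eq_left hj]
    rw [hCj]
    exact mem_staircases_of_le hC.monotone_min (Set.mem_insert _ _)
      (Set.mem_insert_of_mem _ (Set.mem_insert _ _)) hj (subset_univ _)
  · refine mem_staircases_of_subset (Set.mem_insert_of_mem _ (Set.mem_insert_of_mem _ hA)) ?_
    simpa only [C', min_self] using (subset_univ _).trans hC.2.1.symm.subset

lemma IsMaximalChain.joinEqUnion_of_distribOn {g : ConvexGeometry I} {C : ℕ → Finset I}
    (hC : IsMaximalChain g C)
    (hd : ∀ m : Set (Finset I), (∀ a ∈ m, g.cl a = a) → IsChain (· ⊆ ·) m →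
      DistribOn g (GenSublattice g ({A | ∃ j ≤ Fintype.card I, A = C j} ∪ m)))
    {j : ℕ} (hj : j ≤ Fintype.card I) : g.JoinEqUnion (C j) := by
  induction j with
  | zero =>
    intro L hL
    rw [hC.1, empty_union, hL]
  | succ j ih =>
    intro L hL
    have hK := ih (by omega) L hL
    obtain ⟨x, -, hx⟩ := hC.exists_succ_eq_insert hj
    rw [hx, insert_union]
    by_cases hxK : x ∈ C j ∪ L
    · rwa [insert_eq_of_mem hxK]
    by_contra hne
    obtain ⟨W, hW, hKW, hxW, hWK⟩ := g.exists_convex_of_cl_insert_ne hK hxK hne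
    have hLW : L ⊆ W := subset_union_right.trans hKW
    have hdist := hd {L, W} (by rintro a (rfl | rfl) <;> assumption) (IsChain.pair hLW)
      W (C (j + 1)) L
      (.base (.inr (.inr rfl))) (.base (.inl ⟨j + 1, hj, rfl⟩)) (.base (.inr (.inl rfl)))
    -- `W ∧ (C (j+1) ∨ L) = (W ∧ C (j+1)) ∨ (W ∧ L) = C j ∨ L` would miss a point of the left side
    rw [hx, inter_insert_of_notMem hxW, inter_eq_right.2 (subset_union_left.trans hKW),
      inter_eq_right.2 hLW, hK, insert_union] at hdist
    exact hWK hdist.le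

/-- `g` is supersolvable iff there is a maximal chain of convex
sets all of whose members belong to every inclusion-maximal order-ideal
family of `g`. -/
theorem stmt_16 (g : ConvexGeometry I) :
    (∃ B : ℕ → Finset I, IsMaximalChain g B ∧
        ∀ j ≤ Fintype.card I, ∀ D : Set (Finset I),
          IsMaxOrderIdealFamily g D → B j ∈ D) ↔
      Supersolvable g := by
  constructor
  · rintro ⟨B, hB, hmem⟩
    exact ⟨B, hB, fun m hm hch => hB.distribOn_genSublattice
      (fun j hj => ConvexGeometry.joinEqUnion_of_forall_mem (hmem j hj)) hm hch⟩
  · rintro ⟨C, hC, hd⟩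
    exact ⟨C, hC, fun j hj D hD => hD.mem_of_joinEqUnion (hC.joinEqUnion_of_distribOn hd hj)⟩
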